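/- arXiv:1912.12930 — 5 statements merged into one kernel-verified Lean document; each statement's English description precedes it below -/
import Mathlib

section
/- Let m, n, k be positive integers with m ≤ n. If for every k-tuple (f₁,…,f_k) of positive definite integral quadratic forms of rank m+1 there exists a positive definite integral quadratic form of rank n+1 representing every f_i, then for every k-tuple (g₁,…,g_k) of positive definite integral quadratic forms of rank m there exists a positive definite integral quadratic form of rank n representing every g_i. (This is the inequality κ(m+1,n+1) ≤ κ(m,n).) -/
open Matrix

/-- A positive definite integral quadratic form of rank `m`. -/
def IsPDForm {m : ℕ} (M : Matrix (Fin m) (Fin m) ℤ) : Prop :=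
  M.IsSymm ∧ ∀ x : Fin m → ℤ, x ≠ 0 → 0 < x ⬝ᵥ M.mulVec x

/-- `N` is represented by `L` if `Tᵀ L T = N` for some integer matrix `T`. -/
def Represents {n m : ℕ} (L : Matrix (Fin n) (Fin n) ℤ)
    (N : Matrix (Fin m) (Fin m) ℤ) : Prop :=
  ∃ T : Matrix (Fin n) (Fin m) ℤ, Tᵀ * L * T = N

/-- An integer `a` is represented by the form `M`. -/
def RepresentsInt {m : ℕ} (M : Matrix (Fin m) (Fin m) ℤ) (a : ℤ) : Prop :=
  ∃ x : Fin m → ℤ, x ⬝ᵥ M.mulVec x = a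

/-- Two integral forms of rank `n` are isometric. -/
def IsomForm {n : ℕ} (A B : Matrix (Fin n) (Fin n) ℤ) : Prop :=
  ∃ U : Matrix (Fin n) (Fin n) ℤ, IsUnit U.det ∧ Uᵀ * A * U = B

/-!
Pad each `gᵢ` to `⟨1⟩ ⊥ gᵢ` and let `L` of rank `n + 1` represent all of these. Two vectors
of norm `1` in a positive definite integral lattice are exchanged by an isometry: their inner
product `t` has `t² ≤ 1`, so either they agree up to sign, or they are orthogonal and the
reflection in their difference (a vector of norm `2`) swaps them. Hence, after fixing one unit
vector `u`, every `gᵢ` embeds into the orthogonal complement of `u`, a sublattice of rank `n`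
on which `L` restricts to a positive definite form of rank `n`.
-/

universe u

/-- The orthogonal sum `⟨1⟩ ⊥ g`. -/
def padOne {m : ℕ} (g : Matrix (Fin m) (Fin m) ℤ) : Matrix (Fin (m + 1)) (Fin (m + 1)) ℤ :=
  Matrix.of (vecCons (vecCons 1 0) fun a => vecCons 0 (g a))

lemma toBilin'_padOne_vecCons {m : ℕ} (g : Matrix (Fin m) (Fin m) ℤ) (a b : ℤ)
    (x y : Fin m → ℤ) :
    (padOne g).toBilin' (vecCons a x) (vecCons b y) = a * b + g.toBilin' x y := by
  simp [Matrix.toBilin'_apply, Fin.sum_univ_succ, padOne]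

lemma isPDForm_iff {n : ℕ} {L : Matrix (Fin n) (Fin n) ℤ} :
    IsPDForm L ↔ L.toBilin'.IsSymm ∧ ∀ x, x ≠ 0 → 0 < L.toBilin' x x := by
  simp only [IsPDForm, Matrix.isSymm_toBilin'_iff_isSymm, Matrix.toBilin'_apply']

lemma IsPDForm.padOne {m : ℕ} {g : Matrix (Fin m) (Fin m) ℤ} (hg : IsPDForm g) :
    IsPDForm (padOne g) := by
  rw [isPDForm_iff] at hg ⊢
  refine ⟨⟨fun x y => ?_⟩, fun x hx => ?_⟩
  · rw [← cons_head_tail x, ← cons_head_tail y, toBilin'_padOne_vecCons,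
      toBilin'_padOne_vecCons, hg.1.eq, mul_comm]
  · rw [← cons_head_tail x, toBilin'_padOne_vecCons]
    by_cases htail : vecTail x = 0
    · have hhead : vecHead x ≠ 0 := fun h0 => hx (by rw [← cons_head_tail x, h0, htail]; simp)
      simpa [htail] using mul_self_pos.mpr hhead
    · exact add_pos_of_nonneg_of_pos (mul_self_nonneg _) (hg.2 _ htail)

lemma represents_iff_exists_comp {n m : ℕ} {L : Matrix (Fin n) (Fin n) ℤ}
    {N : Matrix (Fin m) (Fin m) ℤ} :
    Represents L N ↔ ∃ f : (Fin m → ℤ) →ₗ[ℤ] Fin n → ℤ, L.toBilin'.comp f f = N.toBilin' := by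
  constructor
  · rintro ⟨T, rfl⟩
    exact ⟨T.toLin', Matrix.toBilin'_comp L T T⟩
  · rintro ⟨f, hf⟩
    refine ⟨LinearMap.toMatrix' f, Matrix.toBilin'.injective ?_⟩
    rw [← Matrix.toBilin'_comp, Matrix.toLin'_toMatrix', hf]

lemma Represents.exists_unit_orthogonal_of_padOne {n m : ℕ} {L : Matrix (Fin n) (Fin n) ℤ}
    {g : Matrix (Fin m) (Fin m) ℤ} (h : Represents L (padOne g)) :
    ∃ (v : Fin n → ℤ) (f : (Fin m → ℤ) →ₗ[ℤ] Fin n → ℤ), L.toBilin' v v = 1 ∧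
      (∀ x, L.toBilin' v (f x) = 0) ∧ L.toBilin'.comp f f = g.toBilin' := by
  obtain ⟨F, hF⟩ := represents_iff_exists_comp.mp h
  have hF_cons (a b : ℤ) (x y : Fin m → ℤ) :
      L.toBilin' (F (vecCons a x)) (F (vecCons b y)) = a * b + g.toBilin' x y := by
    rw [← toBilin'_padOne_vecCons, ← hF, LinearMap.BilinForm.comp_apply]
  refine ⟨F (vecCons 1 0), F ∘ₗ (0 : (Fin m → ℤ) →ₗ[ℤ] ℤ).vecCons LinearMap.id, ?_,
    fun x => ?_, LinearMap.BilinForm.ext fun x y => ?_⟩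
  · simpa using hF_cons 1 1 0 0
  · simpa using hF_cons 1 0 0 x
  · simpa using hF_cons 0 0 x y

namespace LinearMap.BilinForm

variable {M : Type*} [AddCommGroup M]

lemma IsSymm.isOrthogonal_reflection {R : Type*} [CommRing R] [Module R M]
    {B : LinearMap.BilinForm R M} (hB : B.IsSymm) {d : M} (hd : B d d = 2) :
    B.IsOrthogonal (Module.reflection hd) := by
  intro x y
  simp only [Module.reflection_apply, sub_left, sub_right, smul_left, smul_right, hd, hB.eq x d]
  ring

theorem exists_isOrthogonal_apply_eq {B : LinearMap.BilinForm ℤ M} (hB : B.IsSymm)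
    (hpos : ∀ x, x ≠ 0 → 0 < B x x) {u v : M} (hu : B u u = 1) (hv : B v v = 1) :
    ∃ ρ : M →ₗ[ℤ] M, B.IsOrthogonal ρ ∧ ρ v = u := by
  set t := B u v with ht
  have hvu : B v u = t := hB.eq v u
  have hnorm : B (v - t • u) (v - t • u) = 1 - t * t := by
    simp only [sub_left, sub_right, smul_left, smul_right, hu, hv, hvu, ← ht]
    ring
  rcases eq_or_ne t 0 with h0 | h0
  · have hdv : B (v - u) v = 1 := by simp [hv, ← ht, h0]
    have hd : B (v - u) (v - u) = 2 := by
      simp only [sub_left, sub_right, hu, hv, hvu, ← ht, h0]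
      norm_num
    refine ⟨Module.reflection hd, hB.isOrthogonal_reflection hd, ?_⟩
    rw [LinearEquiv.coe_coe, Module.reflection_apply, hdv, one_smul, sub_sub_cancel]
  · have htt : t * t = 1 := by
      have hnonneg : 0 ≤ B (v - t • u) (v - t • u) := by
        rcases eq_or_ne (v - t • u) 0 with h | h
        · simp [h]
        · exact (hpos _ h).le
      have := mul_self_pos.mpr h0
      linarith
    have hvt : v = t • u := by
      by_contra hne
      have := hpos _ (sub_ne_zero.mpr hne)
      linarith
    refine ⟨t • LinearMap.id, fun x y => ?_, ?_⟩
    · simp [← mul_assoc, htt]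
    · simp [hvt, smul_smul, htt]

end LinearMap.BilinForm

theorem LinearMap.finrank_ker_add_one_of_surjective {R : Type*} {M : Type u} [Ring R]
    [StrongRankCondition R] [HasRankNullity.{u} R] [AddCommGroup M] [Module R M]
    [Module.Finite R M] {φ : M →ₗ[R] R} (hφ : Function.Surjective φ) :
    Module.finrank R (LinearMap.ker φ) + 1 = Module.finrank R M := by
  rw [← (LinearMap.ker φ).finrank_quotient_add_finrank,
    (φ.quotKerEquivOfSurjective hφ).finrank_eq, Module.finrank_self, add_comm]

theorem IsPDForm.exists_restrict_submodule {N n : ℕ} {L : Matrix (Fin N) (Fin N) ℤ}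
    (hL : IsPDForm L) {K : Submodule ℤ (Fin N → ℤ)} (hK : Module.finrank ℤ K = n) :
    ∃ L' : Matrix (Fin n) (Fin n) ℤ, IsPDForm L' ∧
      ∀ {m : ℕ} {G : Matrix (Fin m) (Fin m) ℤ} (f : (Fin m → ℤ) →ₗ[ℤ] Fin N → ℤ),
        LinearMap.range f ≤ K → L.toBilin'.comp f f = G.toBilin' → Represents L' G := by
  let b := (Module.finBasis ℤ K).reindex (finCongr hK)
  let j := K.subtype ∘ₗ b.equivFun.symm.toLinearMap
  have hj : Function.Injective j := K.injective_subtype.comp b.equivFun.symm.injective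
  rw [isPDForm_iff] at hL
  refine ⟨LinearMap.BilinForm.toMatrix' (L.toBilin'.comp j j), ?_, fun f hfK hf => ?_⟩
  · rw [isPDForm_iff, Matrix.toBilin'_toMatrix']
    exact ⟨⟨fun x y => hL.1.eq _ _⟩, fun x hx => hL.2 _ ((map_ne_zero_iff j hj).mpr hx)⟩
  · let h := b.equivFun.toLinearMap ∘ₗ
      f.codRestrict K fun x => hfK (LinearMap.mem_range_self f x)
    have hjh : j ∘ₗ h = f := LinearMap.ext fun x => by simp [j, h]
    refine represents_iff_exists_comp.mpr ⟨h, ?_⟩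
    rw [Matrix.toBilin'_toMatrix', LinearMap.BilinForm.comp_comp, hjh, hf]

theorem kappa_antitone_general (m n k : ℕ) (hk : 0 < k)
    (H : ∀ f : Fin k → Matrix (Fin (m + 1)) (Fin (m + 1)) ℤ, (∀ i, IsPDForm (f i)) →
      ∃ L : Matrix (Fin (n + 1)) (Fin (n + 1)) ℤ, IsPDForm L ∧ ∀ i, Represents L (f i)) :
    ∀ g : Fin k → Matrix (Fin m) (Fin m) ℤ, (∀ i, IsPDForm (g i)) →
      ∃ L : Matrix (Fin n) (Fin n) ℤ, IsPDForm L ∧ ∀ i, Represents L (g i) := by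
  intro g hg
  obtain ⟨L, hL, hrep⟩ := H (fun i => padOne (g i)) fun i => (hg i).padOne
  have hB := isPDForm_iff.mp hL
  obtain ⟨u, -, hu, -⟩ := (hrep ⟨0, hk⟩).exists_unit_orthogonal_of_padOne
  have hK : Module.finrank ℤ (LinearMap.ker (L.toBilin' u)) = n := by
    have := LinearMap.finrank_ker_add_one_of_surjective (φ := L.toBilin' u)
      fun z => ⟨z • u, by rw [LinearMap.BilinForm.smul_right, hu, mul_one]⟩
    simpa using this
  obtain ⟨L', hL', hrestrict⟩ := hL.exists_restrict_submodule hK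
  refine ⟨L', hL', fun i => ?_⟩
  obtain ⟨v, f, hv, hfv, hf⟩ := (hrep i).exists_unit_orthogonal_of_padOne
  obtain ⟨ρ, hρ, hρv⟩ := LinearMap.BilinForm.exists_isOrthogonal_apply_eq hB.1 hB.2 hu hv
  refine hrestrict (ρ ∘ₗ f) ?_ ?_
  · rintro _ ⟨x, rfl⟩
    simp [LinearMap.mem_ker, ← hρv, hρ _ _, hfv]
  · rw [← hf]
    ext x y
    exact hρ _ _

/-- κ(m+1, n+1) ≤ κ(m, n): if every k-tuple of rank-(m+1) forms is simultaneously
represented by some rank-(n+1) form, then every k-tuple of rank-m forms is simultaneously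
represented by some rank-n form. -/
theorem kappa_antitone (m n k : ℕ) (hm : 0 < m) (hn : 0 < n) (hk : 0 < k) (hmn : m ≤ n)
    (H : ∀ f : Fin k → Matrix (Fin (m + 1)) (Fin (m + 1)) ℤ, (∀ i, IsPDForm (f i)) →
      ∃ L : Matrix (Fin (n + 1)) (Fin (n + 1)) ℤ, IsPDForm L ∧ ∀ i, Represents L (f i)) :
    ∀ g : Fin k → Matrix (Fin m) (Fin m) ℤ, (∀ i, IsPDForm (g i)) →
      ∃ L : Matrix (Fin n) (Fin n) ℤ, IsPDForm L ∧ ∀ i, Represents L (g i) :=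
  kappa_antitone_general m n k hk H
end

section
/- (a) There is no positive definite integral binary quadratic form that represents the three integers 1, 2, and 15. (b) For every integer m ≥ 2, there is no positive definite integral quadratic form of rank m+1 that represents both the identity form I_m and the form I_{m-2} ⊥ ⟨3⟩ ⊥ ⟨3⟩. (Consequently κ(1,2) = 2 and κ(m,m+1) = 1 for m ≥ 2.) -/
open Matrix

/-!
If `L` of rank `m + 1` represents `I_m` through `T`, the image of `T` is a unimodular sublattice
and therefore splits off orthogonally: `L = Aᵀ A + Πᵀ L Π` with `A = Tᵀ L` and `Π = 1 - T A`.
The columns of `Π` lie in the kernel of the split surjection `A`, a free `ℤ`-module of rank one,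
so `Π = w βᵀ` and `L` is represented by `I_m ⊥ ⟨c⟩` with `c = wᵀ L w > 0`. Anything represented
by `L` is then represented by `I_m ⊥ ⟨c⟩`.

(a) If `⟨1, c⟩` represents `2`, then `c ∈ {1, 2}`, and neither `⟨1, 1⟩` nor `⟨1, 2⟩`
represents `15`.

(b) In `I_m ⊥ ⟨c⟩` a vector of norm one is `±eᵢ` with `eᵢ` of norm one, so the images of the
first `m - 2` basis vectors of `I_{m-2} ⊥ ⟨3, 3⟩` are `±e_{σ(j)}` for an injective `σ`, and the
last two images live on the three remaining coordinates, a copy of `⟨1, 1, c'⟩`. But `⟨1, 1, c'⟩`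
contains no two orthogonal vectors of norm `3`: Lagrange's identity in the first two coordinates
forces `c = 1` and both third coordinates to be `±1`; then all coordinates are `±1` and the inner
product is a sum of three odd numbers.
-/

open Module

namespace Matrix

variable {R : Type*} [CommRing R]

theorem transpose_mul_diagonal_mul_apply {ι κ : Type*} [Fintype ι] [DecidableEq ι]
    (S : Matrix ι κ R) (ν : ι → R) (j l : κ) :
    (Sᵀ * diagonal ν * S) j l = ∑ i, ν i * S i j * S i l := by
  simp only [mul_apply, transpose_apply, diagonal_apply, mul_ite, mul_zero, Finset.sum_ite_eq',
    Finset.mem_univ, if_true]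
  exact Finset.sum_congr rfl fun i _ => by ring

theorem transpose_mul_diagonal_snoc_mul {n : Type*} {k : ℕ} (A : Matrix (Fin k) n R) (β : n → R)
    (c : R) :
    (of (Fin.snoc (A ·) β))ᵀ * diagonal (Fin.snoc (1 : Fin k → R) c) * of (Fin.snoc (A ·) β) =
      Aᵀ * A + c • vecMulVec β β := by
  ext j l
  rw [transpose_mul_diagonal_mul_apply, Fin.sum_univ_castSucc]
  simp only [Fin.snoc_castSucc, Pi.one_apply, of_apply, one_mul, Fin.snoc_last, add_apply,
    mul_apply, transpose_apply, smul_apply, vecMulVec_apply, smul_eq_mul]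
  ring

theorem eq_transpose_mul_add_of_transpose_mul_mul_eq_one {n m : Type*} [Fintype n] [Fintype m]
    [DecidableEq n] [DecidableEq m] {L : Matrix n n R} (hL : L.IsSymm) {T : Matrix n m R}
    (hT : Tᵀ * L * T = 1) :
    L = (Tᵀ * L)ᵀ * (Tᵀ * L) + (1 - T * (Tᵀ * L))ᵀ * L * (1 - T * (Tᵀ * L)) := by
  have hT' : ∀ X : Matrix m n R, Tᵀ * (L * (T * X)) = X := fun X => by
    rw [← Matrix.mul_assoc L, ← Matrix.mul_assoc, ← Matrix.mul_assoc, hT, Matrix.one_mul]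
  simp only [transpose_sub, transpose_one, transpose_mul, transpose_transpose, hL.eq, sub_mul,
    mul_sub, Matrix.one_mul, Matrix.mul_one, Matrix.mul_assoc, hT']
  abel

theorem exists_ker_mulVecLin_eq_span_singleton [IsDomain R] [IsPrincipalIdealRing R]
    {ι κ : Type*} [Fintype ι] [Fintype κ] [DecidableEq ι] {A : Matrix ι κ R} {T : Matrix κ ι R}
    (hAT : A * T = 1) (hcard : Fintype.card κ = Fintype.card ι + 1) :
    ∃ w : κ → R, w ≠ 0 ∧ LinearMap.ker A.mulVecLin = R ∙ w := by
  have hsurj : Function.Surjective A.mulVecLin := fun u =>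
    ⟨T *ᵥ u, by simp [mulVec_mulVec, hAT]⟩
  have hrank := LinearMap.lift_rank_range_add_rank_ker A.mulVecLin
  rw [LinearMap.range_eq_top.mpr hsurj, rank_top, ← finrank_eq_rank, ← finrank_eq_rank,
    ← finrank_eq_rank] at hrank
  simp only [Cardinal.lift_natCast] at hrank
  norm_cast at hrank
  simp only [finrank_fintype_fun_eq_card, hcard] at hrank
  let b := finBasisOfFinrankEq R _ (show finrank R (LinearMap.ker A.mulVecLin) = 1 by omega)
  refine ⟨b 0, fun h => b.ne_zero 0 (Subtype.ext h), le_antisymm (fun v hv => ?_) ?_⟩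
  · rw [Submodule.mem_span_singleton]
    exact ⟨b.repr ⟨v, hv⟩ 0, by simpa using congrArg Subtype.val (b.sum_repr ⟨v, hv⟩)⟩
  · rw [Submodule.span_singleton_le_iff_mem]
    exact (b 0).2

end Matrix

theorem Represents.trans {n m k : ℕ} {L : Matrix (Fin n) (Fin n) ℤ}
    {M : Matrix (Fin m) (Fin m) ℤ} {N : Matrix (Fin k) (Fin k) ℤ} (hLM : Represents L M)
    (hMN : Represents M N) : Represents L N := by
  obtain ⟨T, rfl⟩ := hLM
  obtain ⟨U, rfl⟩ := hMN
  exact ⟨T * U, by simp only [transpose_mul, Matrix.mul_assoc]⟩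

theorem Represents.representsInt {n m : ℕ} {L : Matrix (Fin n) (Fin n) ℤ}
    {M : Matrix (Fin m) (Fin m) ℤ} {a : ℤ} (hLM : Represents L M) (ha : RepresentsInt M a) :
    RepresentsInt L a := by
  obtain ⟨T, rfl⟩ := hLM
  obtain ⟨x, rfl⟩ := ha
  exact ⟨T *ᵥ x, by rw [← mulVec_mulVec, ← mulVec_mulVec, dotProduct_mulVec x Tᵀ, vecMul_transpose]⟩

theorem RepresentsInt.represents_one {m : ℕ} {M : Matrix (Fin m) (Fin m) ℤ}
    (h : RepresentsInt M 1) : Represents M (1 : Matrix (Fin 1) (Fin 1) ℤ) := by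
  obtain ⟨x, hx⟩ := h
  refine ⟨of fun i _ => x i, ?_⟩
  ext i j
  fin_cases i; fin_cases j
  simp only [mul_apply, transpose_apply, of_apply, Finset.sum_mul, mul_assoc, one_apply_eq, ← hx,
    dotProduct, mulVec, Finset.mul_sum]
  exact Finset.sum_comm

theorem RepresentsInt.exists_sq_add_mul_sq {c a : ℤ}
    (h : RepresentsInt (diagonal (Fin.snoc (1 : Fin 1 → ℤ) c)) a) :
    ∃ x y, x ^ 2 + c * y ^ 2 = a := by
  obtain ⟨v, rfl⟩ := h
  exact ⟨v 0, v 1, by simp [dotProduct, Fin.snoc, sq, mul_left_comm]⟩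

theorem IsPDForm.exists_represents_diagonal_snoc {m : ℕ}
    {L : Matrix (Fin (m + 1)) (Fin (m + 1)) ℤ} (hL : IsPDForm L)
    (h : Represents L (1 : Matrix (Fin m) (Fin m) ℤ)) :
    ∃ c : ℤ, 0 < c ∧ Represents (diagonal (Fin.snoc (1 : Fin m → ℤ) c)) L := by
  obtain ⟨T, hT⟩ := h
  obtain ⟨w, hw0, hker⟩ := exists_ker_mulVecLin_eq_span_singleton hT (by simp)
  have hcol : ∀ j, (1 - T * (Tᵀ * L)).col j ∈ LinearMap.ker (Tᵀ * L).mulVecLin := by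
    intro j
    have : Tᵀ * L * (1 - T * (Tᵀ * L)) = 0 := by
      rw [Matrix.mul_sub, Matrix.mul_one, ← Matrix.mul_assoc, hT, Matrix.one_mul, sub_self]
    rw [← mulVec_single_one, LinearMap.mem_ker, mulVecLin_apply, mulVec_mulVec, this, zero_mulVec]
  choose β hβ using fun j => Submodule.mem_span_singleton.mp (hker ▸ hcol j)
  have hproj : 1 - T * (Tᵀ * L) = vecMulVec w β := by
    ext i j
    simpa [vecMulVec_apply, mul_comm] using (congrFun (hβ j) i).symm
  refine ⟨w ⬝ᵥ L *ᵥ w, hL.2 w hw0, of (Fin.snoc (fun i => (Tᵀ * L) i) β), ?_⟩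
  rw [transpose_mul_diagonal_snoc_mul]
  conv_rhs => rw [eq_transpose_mul_add_of_transpose_mul_mul_eq_one hL.1 hT, hproj]
  rw [transpose_vecMulVec, vecMulVec_mul, vecMulVec_mul_vecMulVec, ← dotProduct_mulVec,
    vecMulVec_smul]

theorem Int.sq_eq_zero_or_one_of_sq_lt_four {x : ℤ} (h : x ^ 2 < 4) : x ^ 2 = 0 ∨ x ^ 2 = 1 := by
  obtain ⟨hl, hu⟩ : -1 ≤ x ∧ x ≤ 1 := ⟨by nlinarith, by nlinarith⟩
  interval_cases x <;> simp

theorem Int.sq_add_sq_ne_three (x y : ℤ) : x ^ 2 + y ^ 2 ≠ 3 := by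
  intro h
  rcases Int.sq_eq_zero_or_one_of_sq_lt_four (x := x) (by nlinarith [sq_nonneg y]) with hx | hx <;>
  rcases Int.sq_eq_zero_or_one_of_sq_lt_four (x := y) (by nlinarith [sq_nonneg x]) with hy | hy <;>
  omega

theorem eq_one_or_two_of_sq_add_mul_sq_eq_two {c x y : ℤ} (hc : 0 < c)
    (h : x ^ 2 + c * y ^ 2 = 2) : c = 1 ∨ c = 2 := by
  have hy : y ≠ 0 := by
    rintro rfl
    rcases Int.sq_eq_zero_or_one_of_sq_lt_four (x := x) (by linarith) with hx | hx <;> linarith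
  have : 0 < y ^ 2 := by positivity
  have : c ≤ 2 := by nlinarith [sq_nonneg x]
  omega

theorem sq_add_mul_sq_ne_fifteen {c : ℤ} (hc : c = 1 ∨ c = 2) (x y : ℤ) :
    x ^ 2 + c * y ^ 2 ≠ 15 := by
  intro h
  have hc0 : 0 < c := by omega
  obtain ⟨hxl, hxu⟩ : -3 ≤ x ∧ x ≤ 3 := ⟨by nlinarith [sq_nonneg y], by nlinarith [sq_nonneg y]⟩
  obtain ⟨hyl, hyu⟩ : -3 ≤ y ∧ y ≤ 3 := ⟨by nlinarith [sq_nonneg x], by nlinarith [sq_nonneg x]⟩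
  rcases hc with rfl | rfl <;> interval_cases x <;> interval_cases y <;> omega

theorem eq_one_of_orthogonal_of_norm_eq_three {c p₁ p₂ p₃ q₁ q₂ q₃ : ℤ} (hc : 1 ≤ c)
    (hp : p₁ ^ 2 + p₂ ^ 2 + c * p₃ ^ 2 = 3) (hq : q₁ ^ 2 + q₂ ^ 2 + c * q₃ ^ 2 = 3)
    (hpq : p₁ * q₁ + p₂ * q₂ + c * p₃ * q₃ = 0) : c = 1 ∧ p₃ ^ 2 = 1 ∧ q₃ ^ 2 = 1 := by
  have hlagrange : (p₁ * q₂ - p₂ * q₁) ^ 2 = 9 - 3 * c * (p₃ ^ 2 + q₃ ^ 2) := by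
    linear_combination (q₁ ^ 2 + q₂ ^ 2) * hp + (3 - c * p₃ ^ 2) * hq +
      (c * p₃ * q₃ - p₁ * q₁ - p₂ * q₂) * hpq
  have hp₃ : p₃ ≠ 0 := by rintro rfl; exact Int.sq_add_sq_ne_three p₁ p₂ (by linarith)
  have hq₃ : q₃ ≠ 0 := by rintro rfl; exact Int.sq_add_sq_ne_three q₁ q₂ (by linarith)
  have hP : 0 < p₃ ^ 2 := by positivity
  have hQ : 0 < q₃ ^ 2 := by positivity
  have hc1 : c = 1 := by nlinarith [sq_nonneg (p₁ * q₂ - p₂ * q₁)]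
  subst hc1
  have hPQ : p₃ ^ 2 + q₃ ^ 2 ≤ 3 := by nlinarith [sq_nonneg (p₁ * q₂ - p₂ * q₁)]
  rcases Int.sq_eq_zero_or_one_of_sq_lt_four (x := p₃) (by omega) with h | h <;>
  rcases Int.sq_eq_zero_or_one_of_sq_lt_four (x := q₃) (by omega) with h' | h' <;>
  omega

theorem not_orthogonal_of_norm_eq_three {c p₁ p₂ p₃ q₁ q₂ q₃ : ℤ} (hc : 1 ≤ c)
    (hp : p₁ ^ 2 + p₂ ^ 2 + c * p₃ ^ 2 = 3) (hq : q₁ ^ 2 + q₂ ^ 2 + c * q₃ ^ 2 = 3) :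
    p₁ * q₁ + p₂ * q₂ + c * p₃ * q₃ ≠ 0 := by
  intro hpq
  obtain ⟨rfl, hp₃, hq₃⟩ := eq_one_of_orthogonal_of_norm_eq_three hc hp hq hpq
  -- in `⟨1, 1, 1⟩` every coordinate can play the role of the third one
  obtain ⟨-, hp₁, hq₁⟩ := eq_one_of_orthogonal_of_norm_eq_three (p₁ := p₂) (p₂ := p₃) (p₃ := p₁)
    (q₁ := q₂) (q₂ := q₃) (q₃ := q₁) le_rfl
    (by linear_combination hp) (by linear_combination hq) (by linear_combination hpq)
  obtain ⟨-, hp₂, hq₂⟩ := eq_one_of_orthogonal_of_norm_eq_three (p₁ := p₃) (p₂ := p₁) (p₃ := p₂)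
    (q₁ := q₃) (q₂ := q₁) (q₃ := q₂) le_rfl
    (by linear_combination hp) (by linear_combination hq) (by linear_combination hpq)
  have hunit : ∀ a b : ℤ, a ^ 2 = 1 → b ^ 2 = 1 → a * b = 1 ∨ a * b = -1 := fun a b ha hb =>
    mul_self_eq_one_iff.mp (by linear_combination b ^ 2 * ha + hb)
  rcases hunit _ _ hp₁ hq₁ with h₁ | h₁ <;> rcases hunit _ _ hp₂ hq₂ with h₂ | h₂ <;>
    rcases hunit _ _ hp₃ hq₃ with h₃ | h₃ <;> linarith

section WeightedSums

variable {ι : Type*} {ν : ι → ℤ}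

theorem exists_eq_single_of_weighted_sum_mul_self_eq_one [Fintype ι] (hν : ∀ i, 1 ≤ ν i)
    {x : ι → ℤ} (h : ∑ i, ν i * x i * x i = 1) :
    ∃ i, ν i = 1 ∧ x i * x i = 1 ∧ ∀ j ≠ i, x j = 0 := by
  classical
  have hnn : ∀ i, 0 ≤ ν i * x i * x i := fun i => by
    rw [mul_assoc]; exact mul_nonneg (by linarith [hν i]) (mul_self_nonneg _)
  obtain ⟨i, hi⟩ : ∃ i, x i ≠ 0 := by
    by_contra! h0
    simp [h0] at h
  have hle : ν i * x i * x i ≤ 1 :=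
    h ▸ Finset.single_le_sum (fun j _ => hnn j) (Finset.mem_univ i)
  have hxi : 0 < x i * x i := mul_self_pos.mpr hi
  have hνi : ν i = 1 := by nlinarith [hν i]
  have hxi1 : x i * x i = 1 := by nlinarith
  refine ⟨i, hνi, hxi1, fun j hj => ?_⟩
  have hrest : ∑ j ∈ Finset.univ.erase i, ν j * x j * x j = 0 := by
    rw [← Finset.add_sum_erase _ _ (Finset.mem_univ i), hνi, one_mul, hxi1] at h
    linarith
  have hj0 := (Finset.sum_eq_zero_iff_of_nonneg (fun j _ => hnn j)).mp hrest j (by simp [hj])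
  rw [mul_assoc] at hj0
  exact mul_self_eq_zero.mp ((mul_eq_zero.mp hj0).resolve_left (by linarith [hν j]))

theorem Finset.not_orthogonal_of_weighted_norm_eq_three [DecidableEq ι] (hν : ∀ i, 1 ≤ ν i)
    {i₀ : ι} (hν₀ : ∀ i ≠ i₀, ν i = 1) {R : Finset ι} (hR : R.card = 3) {p q : ι → ℤ}
    (hp : ∑ i ∈ R, ν i * p i * p i = 3) (hq : ∑ i ∈ R, ν i * q i * q i = 3) :
    ∑ i ∈ R, ν i * p i * q i ≠ 0 := by
  obtain ⟨x, y, z, hxy, hxz, hyz, rfl⟩ := Finset.card_eq_three.mp hR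
  simp only [Finset.sum_insert, Finset.mem_insert, Finset.mem_singleton, hxy, hxz, hyz,
    not_false_eq_true, or_self, Finset.sum_singleton] at hp hq ⊢
  have key : ∀ a b d, ν a = 1 → ν b = 1 →
      ν a * p a * p a + ν b * p b * p b + ν d * p d * p d = 3 →
      ν a * q a * q a + ν b * q b * q b + ν d * q d * q d = 3 →
      ν a * p a * q a + ν b * p b * q b + ν d * p d * q d = 0 → False := by
    intro a b d ha hb hp hq hpq
    rw [ha, hb] at hp hq hpq
    exact not_orthogonal_of_norm_eq_three (p₁ := p a) (p₂ := p b) (p₃ := p d)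
      (q₁ := q a) (q₂ := q b) (q₃ := q d) (hν d)
      (by linear_combination hp) (by linear_combination hq) (by linear_combination hpq)
  intro hpq
  by_cases hx : x = i₀
  · subst hx
    exact key y z x (hν₀ y hxy.symm) (hν₀ z hxz.symm) (by linear_combination hp)
      (by linear_combination hq) (by linear_combination hpq)
  by_cases hy : y = i₀
  · subst hy
    exact key x z y (hν₀ x hxy) (hν₀ z hyz.symm) (by linear_combination hp)
      (by linear_combination hq) (by linear_combination hpq)
  exact key x y z (hν₀ x hx) (hν₀ y hy) (by linear_combination hp) (by linear_combination hq)
    (by linear_combination hpq)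

theorem exists_injective_of_orthonormal [Fintype ι] (hν : ∀ i, 1 ≤ ν i) {k : ℕ}
    {u : Fin k → ι → ℤ} (hu : ∀ j l, ∑ i, ν i * u j i * u l i = if j = l then 1 else 0) :
    ∃ σ : Fin k → ι, Function.Injective σ ∧
      ∀ j (y : ι → ℤ), ∑ i, ν i * u j i * y i = 0 → y (σ j) = 0 := by
  choose σ hσν hσsq hσ0 using fun j =>
    exists_eq_single_of_weighted_sum_mul_self_eq_one hν ((hu j j).trans (if_pos rfl))
  have horth : ∀ j (y : ι → ℤ), ∑ i, ν i * u j i * y i = 0 → y (σ j) = 0 := by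
    intro j y h
    rw [Fintype.sum_eq_single (σ j) fun i hi => by rw [hσ0 j i hi, mul_zero, zero_mul], hσν,
      one_mul] at h
    exact (mul_eq_zero.mp h).resolve_left fun h0 => by simpa [h0] using hσsq j
  refine ⟨σ, fun j l hjl => ?_, horth⟩
  by_contra hne
  have h0 := horth j (u l) ((hu j l).trans (if_neg hne))
  simpa [← hjl, h0] using hσsq l

theorem transpose_mul_diagonal_mul_ne [Fintype ι] [DecidableEq ι] (hν : ∀ i, 1 ≤ ν i) {i₀ : ι}
    (hν₀ : ∀ i ≠ i₀, ν i = 1) {k : ℕ} (hcard : Fintype.card ι = k + 3)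
    (S : Matrix ι (Fin (k + 2)) ℤ) :
    Sᵀ * diagonal ν * S ≠ diagonal fun j : Fin (k + 2) => if (j : ℕ) < k then 1 else 3 := by
  intro hS
  have hgram : ∀ j l, ∑ i, ν i * S i j * S i l =
      diagonal (fun j : Fin (k + 2) => if (j : ℕ) < k then (1 : ℤ) else 3) j l := fun j l => by
    rw [← transpose_mul_diagonal_mul_apply, hS]
  obtain ⟨σ, hσinj, horth⟩ := exists_injective_of_orthonormal hν (u := fun j i => S i (j.castAdd 2))
    fun j l => by simp [hgram, diagonal_apply]
  have hlast : ∀ (a : Fin 2) (j : Fin k), S (σ j) (a.natAdd k) = 0 := by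
    intro a j
    have hne : j.castAdd 2 ≠ a.natAdd k :=
      Fin.ne_of_val_ne (by simp only [Fin.val_castAdd, Fin.val_natAdd]; omega)
    exact horth j (S · (a.natAdd k)) (by rw [hgram, diagonal_apply_ne _ hne])
  set R := (Finset.univ.image σ)ᶜ
  have hR : R.card = 3 := by
    rw [Finset.card_compl, Finset.card_image_of_injective _ hσinj, Finset.card_univ,
      Fintype.card_fin, hcard]
    omega
  have hsum : ∀ f : ι → ℤ, (∀ j, f (σ j) = 0) → ∑ i ∈ R, f i = ∑ i, f i := fun f hf =>
    Finset.sum_subset (Finset.subset_univ R) fun i _ hi => by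
      obtain ⟨j, -, rfl⟩ := Finset.mem_image.mp (Finset.notMem_compl.mp hi)
      exact hf j
  refine R.not_orthogonal_of_weighted_norm_eq_three hν hν₀ hR (p := (S · (Fin.natAdd k 0)))
    (q := (S · (Fin.natAdd k 1))) ?_ ?_ ?_
  · rw [hsum _ fun j => by simp [hlast 0 j], hgram]
    simp
  · rw [hsum _ fun j => by simp [hlast 1 j], hgram]
    simp
  · rw [hsum _ fun j => by simp [hlast 0 j], hgram]
    simp

end WeightedSums

/-- (a) No positive definite integral binary form represents 1, 2 and 15.
(b) For m ≥ 2, no positive definite integral form of rank m+1 represents both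
I_m and I_{m-2} ⊥ ⟨3⟩ ⊥ ⟨3⟩. -/
theorem kappa_one_two_and_m_m_plus_one :
    (¬ ∃ M : Matrix (Fin 2) (Fin 2) ℤ, IsPDForm M ∧
        RepresentsInt M 1 ∧ RepresentsInt M 2 ∧ RepresentsInt M 15) ∧
    (∀ m : ℕ, 2 ≤ m →
      ¬ ∃ L : Matrix (Fin (m + 1)) (Fin (m + 1)) ℤ, IsPDForm L ∧
          Represents L (1 : Matrix (Fin m) (Fin m) ℤ) ∧
          Represents L
            (Matrix.diagonal fun i : Fin m => if (i : ℕ) < m - 2 then (1 : ℤ) else 3)) := by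
  refine ⟨?_, fun m hm => ?_⟩
  · rintro ⟨M, hM, h1, h2, h15⟩
    obtain ⟨c, hc, hD⟩ := hM.exists_represents_diagonal_snoc h1.represents_one
    obtain ⟨x, y, hxy⟩ := (hD.representsInt h2).exists_sq_add_mul_sq
    obtain ⟨u, v, huv⟩ := (hD.representsInt h15).exists_sq_add_mul_sq
    exact sq_add_mul_sq_ne_fifteen (eq_one_or_two_of_sq_add_mul_sq_eq_two hc hxy) u v huv
  · rintro ⟨L, hL, hI, hN⟩
    obtain ⟨k, rfl⟩ := Nat.exists_eq_add_of_le' hm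
    obtain ⟨c, hc, hD⟩ := hL.exists_represents_diagonal_snoc hI
    obtain ⟨S, hS⟩ := hD.trans hN
    refine transpose_mul_diagonal_mul_ne (i₀ := Fin.last _) (fun i => ?_) (fun i hi => ?_)
      (by simp) S (by simpa using hS)
    · induction i using Fin.lastCases with
      | last => simp only [Fin.snoc_last]; omega
      | cast i => simp
    · obtain ⟨i, rfl⟩ := Fin.exists_castSucc_eq.mpr hi
      simp
end

section
/- Let a and b be positive integers that lie in different square classes, i.e. a·b is not a perfect square. Then the set of positive integers c such that no positive definite integral binary quadratic form represents all three of a, b, and c is infinite. -/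
/-!
If `M` represents `a` by `x` and `b` by `y`, the Gram determinant identity
`a b - (xᵀ M y)² = det M · det(x, y)²` with `det(x, y) ≠ 0` (as `a b` is not a square) bounds
`0 < det M ≤ a b`. By Dirichlet's theorem there is a prime `q ≡ -1 (mod 4 · (a b)!)`; then
`-D` is a non-residue mod `q` for every `0 < D ≤ a b`, in particular for `D = det M`. So `M` is
anisotropic mod `q`: a value divisible by `q` comes from a vector divisible by `q`, hence is
divisible by `q²`. Thus the `q`-adic valuation of every value of `M` is even, and no `M`
represents `a`, `b` and any of the `q ^ (2k+1)`.
-/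

open Matrix

open scoped Nat

theorem jacobiSym_neg_eq_neg_one_of_natCast_eq_neg_one {D q : ℕ} (hD : 0 < D)
    (hq : (q : ZMod (4 * D)) = -1) : jacobiSym (-D) q = -1 := by
  set n := 4 * D - 1 with hn
  have hqmod : q % (4 * D) = n := by
    obtain ⟨k, hk⟩ : ∃ k, 4 * D = k + 1 := ⟨n, by omega⟩
    rw [hk] at hq ⊢
    rw [← ZMod.val_natCast, hq, ZMod.val_neg_one]
    omega
  have hn4 : n % 4 = 3 := by omega
  have hqodd : Odd q := Nat.odd_iff.mpr <| by
    have := Nat.mod_mod_of_dvd q (dvd_mul_right 4 D)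
    omega
  have hnodd : Odd n := Nat.odd_iff.mpr (by omega)
  rw [jacobiSym.mod_right _ hqodd, Int.natAbs_neg, Int.natAbs_natCast, hqmod]
  -- `4 * (-D) ≡ -1 (mod n)` and `4` is a square
  calc jacobiSym (-D) n = jacobiSym (2 ^ 2) n * jacobiSym (-D) n := by
        rw [jacobiSym.sq_one' (a := 2) ((Int.gcd_natCast_natCast 2 n).trans
          (Nat.coprime_two_left.mpr hnodd)), one_mul]
    _ = jacobiSym (-1) n := by
        rw [← jacobiSym.mul_left]
        apply jacobiSym.mod_left'
        have : 2 ^ 2 * -(D : ℤ) = -1 + n * (-1) := by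
          rw [hn, Nat.cast_sub (by omega)]; push_cast; ring
        rw [this, Int.add_mul_emod_self_left]
    _ = -1 := by rw [jacobiSym.at_neg_one hnodd, ZMod.χ₄_nat_three_mod_four hn4]

theorem not_isSquare_neg_of_natCast_eq_neg_one {q N : ℕ} [Fact q.Prime] {D : ℤ}
    (hq : (q : ZMod (4 * N !)) = -1) (hD : 0 < D) (hDN : D ≤ N) :
    ¬ IsSquare (-(D : ZMod q)) := by
  lift D to ℕ using hD.le
  have hqD : (q : ZMod (4 * D)) = -1 := by
    have := congrArg (ZMod.castHom (mul_dvd_mul_left 4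
      (Nat.dvd_factorial (by omega) (by omega))) (ZMod (4 * D))) hq
    rwa [map_natCast, map_neg, map_one] at this
  have := jacobiSym_neg_eq_neg_one_of_natCast_eq_neg_one (by omega) hqD
  rw [ZMod.nonsquare_iff_jacobiSym_eq_neg_one] at this
  simpa using this

theorem eq_zero_and_eq_zero_of_not_isSquare_discr {F : Type*} [Field F] {A B C x y : F}
    (hdisc : ¬ IsSquare (B ^ 2 - A * C)) (h : A * x ^ 2 + 2 * B * x * y + C * y ^ 2 = 0) :
    x = 0 ∧ y = 0 := by
  have hy : y = 0 := by
    by_contra hy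
    exact hdisc ⟨(A * x + B * y) / y, by field_simp; linear_combination (-A) * h⟩
  have hA : A ≠ 0 := by
    rintro rfl
    exact hdisc ⟨B, by ring⟩
  subst hy
  exact ⟨by simpa [hA] using h, rfl⟩

namespace Matrix

theorem dotProduct_mulVec_fin_two {R : Type*} [CommSemiring R] (M : Matrix (Fin 2) (Fin 2) R)
    (x y : Fin 2 → R) :
    x ⬝ᵥ M *ᵥ y = x 0 * (M 0 0 * y 0 + M 0 1 * y 1) + x 1 * (M 1 0 * y 0 + M 1 1 * y 1) := by
  simp [dotProduct, mulVec, Fin.sum_univ_two]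

theorem dotProduct_mulVec_smul_self {R n : Type*} [CommSemiring R] [Fintype n]
    (M : Matrix n n R) (c : R) (w : n → R) :
    (c • w) ⬝ᵥ M *ᵥ (c • w) = c ^ 2 * (w ⬝ᵥ M *ᵥ w) := by
  rw [mulVec_smul, smul_dotProduct, dotProduct_smul, smul_eq_mul, smul_eq_mul, sq, mul_assoc]

namespace IsSymm

theorem dotProduct_mulVec_self_fin_two {R : Type*} [CommSemiring R]
    {M : Matrix (Fin 2) (Fin 2) R} (hM : M.IsSymm) (x : Fin 2 → R) :
    x ⬝ᵥ M *ᵥ x = M 0 0 * x 0 ^ 2 + 2 * M 0 1 * x 0 * x 1 + M 1 1 * x 1 ^ 2 := by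
  rw [dotProduct_mulVec_fin_two, hM.apply 0 1]
  ring

theorem det_mul_sq_fin_two {R : Type*} [CommRing R]
    {M : Matrix (Fin 2) (Fin 2) R} (hM : M.IsSymm) (x y : Fin 2 → R) :
    M.det * (x 0 * y 1 - x 1 * y 0) ^ 2 =
      (x ⬝ᵥ M *ᵥ x) * (y ⬝ᵥ M *ᵥ y) - (x ⬝ᵥ M *ᵥ y) ^ 2 := by
  rw [dotProduct_mulVec_fin_two, dotProduct_mulVec_fin_two, dotProduct_mulVec_fin_two,
    det_fin_two, hM.apply 0 1]
  ring

variable {M : Matrix (Fin 2) (Fin 2) ℤ} {q : ℕ} [hq : Fact q.Prime]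

theorem exists_eq_smul_of_dvd_dotProduct_mulVec_self (hM : M.IsSymm)
    (hdet : ¬ IsSquare (-(M.det : ZMod q))) {z : Fin 2 → ℤ} (hz : (q : ℤ) ∣ z ⬝ᵥ M *ᵥ z) :
    ∃ w, z = (q : ℤ) • w := by
  rw [← ZMod.intCast_zmod_eq_zero_iff_dvd, hM.dotProduct_mulVec_self_fin_two] at hz
  push_cast at hz
  have hdisc : -(M.det : ZMod q) = (M 0 1 : ZMod q) ^ 2 - M 0 0 * M 1 1 := by
    rw [det_fin_two, hM.apply 0 1]
    push_cast
    ring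
  obtain ⟨h0, h1⟩ := eq_zero_and_eq_zero_of_not_isSquare_discr (hdisc ▸ hdet) hz
  obtain ⟨w0, hw0⟩ := (ZMod.intCast_zmod_eq_zero_iff_dvd _ _).mp h0
  obtain ⟨w1, hw1⟩ := (ZMod.intCast_zmod_eq_zero_iff_dvd _ _).mp h1
  exact ⟨![w0, w1], by ext i; fin_cases i <;> simp [hw0, hw1]⟩

theorem not_representsInt_pow_odd (hM : M.IsSymm) (hdet : ¬ IsSquare (-(M.det : ZMod q)))
    (k : ℕ) : ¬ RepresentsInt M ((q : ℤ) ^ (2 * k + 1)) := by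
  have hq0 : (q : ℤ) ≠ 0 := by exact_mod_cast hq.out.ne_zero
  induction k with
  | zero =>
    rintro ⟨z, hz⟩
    obtain ⟨w, rfl⟩ :=
      hM.exists_eq_smul_of_dvd_dotProduct_mulVec_self hdet (hz ▸ dvd_pow_self _ one_ne_zero)
    rw [dotProduct_mulVec_smul_self] at hz
    have : (q : ℤ) * (w ⬝ᵥ M *ᵥ w) = 1 := mul_left_cancel₀ hq0 (by linear_combination hz)
    exact hq.out.not_dvd_one (by exact_mod_cast Dvd.intro _ this)
  | succ k ih =>
    rintro ⟨z, hz⟩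
    obtain ⟨w, rfl⟩ := hM.exists_eq_smul_of_dvd_dotProduct_mulVec_self hdet
      (hz ▸ dvd_pow_self _ (Nat.succ_ne_zero _))
    refine ih ⟨w, mul_left_cancel₀ (pow_ne_zero 2 hq0) ?_⟩
    rw [← dotProduct_mulVec_smul_self, hz]
    ring

end IsSymm

end Matrix

namespace IsPDForm

variable {M : Matrix (Fin 2) (Fin 2) ℤ}

theorem det_pos (hM : IsPDForm M) : 0 < M.det := by
  have hA : 0 < M 0 0 := by
    simpa [hM.1.dotProduct_mulVec_self_fin_two] using hM.2 ![1, 0] (by simp)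
  have hAdet : 0 < M 0 0 * M.det := by
    have h := hM.2 ![M 0 1, -M 0 0] (by simp [hA.ne'])
    simp only [hM.1.dotProduct_mulVec_self_fin_two, cons_val_zero, cons_val_one] at h
    rw [det_fin_two, hM.1.apply 0 1]
    linear_combination h
  exact pos_of_mul_pos_right hAdet hA.le

theorem det_le_mul (hM : IsPDForm M) {a b : ℤ} (hab : ¬ IsSquare (a * b))
    (ha : RepresentsInt M a) (hb : RepresentsInt M b) : M.det ≤ a * b := by
  obtain ⟨x, rfl⟩ := ha
  obtain ⟨y, rfl⟩ := hb
  have hgram := hM.1.det_mul_sq_fin_two x y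
  set d := x 0 * y 1 - x 1 * y 0
  have hd : d ≠ 0 := by
    intro hd
    exact hab ⟨x ⬝ᵥ M *ᵥ y, by rw [hd] at hgram; linear_combination -hgram⟩
  have hd2 : 1 ≤ d ^ 2 := (one_le_sq_iff_one_le_abs d).mpr (Int.one_le_abs hd)
  calc M.det ≤ M.det * d ^ 2 := le_mul_of_one_le_right hM.det_pos.le hd2
    _ = _ := hgram
    _ ≤ _ := sub_le_self _ (sq_nonneg _)

end IsPDForm

theorem infinitely_many_c_not_buried_general (a b : ℕ)
    (hsq : ¬ IsSquare (a * b)) :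
    {c : ℕ | 0 < c ∧ ¬ ∃ M : Matrix (Fin 2) (Fin 2) ℤ, IsPDForm M ∧
        RepresentsInt M (a : ℤ) ∧ RepresentsInt M (b : ℤ) ∧
        RepresentsInt M (c : ℤ)}.Infinite := by
  have : NeZero (4 * (a * b)!) := ⟨by positivity⟩
  obtain ⟨q, -, hq, hqmod⟩ :=
    Nat.forall_exists_prime_gt_and_eq_mod (q := 4 * (a * b)!) isUnit_one.neg 0
  have : Fact q.Prime := ⟨hq⟩
  refine Set.infinite_of_injective_forall_mem (f := fun k : ℕ ↦ q ^ (2 * k + 1))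
    (fun k l hkl ↦ by simpa using Nat.pow_right_injective hq.two_le hkl)
    fun k ↦ ⟨pow_pos hq.pos _, ?_⟩
  rintro ⟨M, hM, hMa, hMb, hMc⟩
  have hdet_le : M.det ≤ (a * b : ℕ) := by
    exact_mod_cast hM.det_le_mul (by exact_mod_cast hsq) hMa hMb
  refine hM.1.not_representsInt_pow_odd ?_ k (by exact_mod_cast hMc)
  exact not_isSquare_neg_of_natCast_eq_neg_one hqmod hM.det_pos hdet_le

/-- If positive integers a, b lie in different square classes, then infinitely many
positive integers c admit no binary form representing a, b, c simultaneously. -/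
theorem infinitely_many_c_not_buried (a b : ℕ) (ha : 0 < a) (hb : 0 < b)
    (hsq : ¬ IsSquare (a * b)) :
    {c : ℕ | 0 < c ∧ ¬ ∃ M : Matrix (Fin 2) (Fin 2) ℤ, IsPDForm M ∧
        RepresentsInt M (a : ℤ) ∧ RepresentsInt M (b : ℤ) ∧
        RepresentsInt M (c : ℤ)}.Infinite :=
  infinitely_many_c_not_buried_general a b hsq
end

section
/- Let m ∈ {6, 7, 8} and let E_m denote the Gram matrix of the root lattice E_m. If a positive definite integral quadratic form L (of any rank) represents both the identity form I_m and E_m, then L represents the form I_m ⊥ E_m; in particular, any such L has rank at least 2m, so no form of rank ≤ 2m−1 represents both I_m and E_m. -/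
open Matrix

/-- The Gram (Cartan) matrix of the root system E_m (m = 6, 7, 8), in the Bourbaki
labelling: nodes 0, 1, …, m-2 form a chain and node m-1 is attached to node 2. -/
def EGram (m : ℕ) : Matrix (Fin m) (Fin m) ℤ := fun i j =>
  if i = j then 2
  else if ((i : ℕ) + 1 = (j : ℕ) ∧ (j : ℕ) < m - 1) ∨
          ((j : ℕ) + 1 = (i : ℕ) ∧ (i : ℕ) < m - 1) ∨
          ((i : ℕ) = m - 1 ∧ (j : ℕ) = 2) ∨
          ((j : ℕ) = m - 1 ∧ (i : ℕ) = 2) then -1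
  else 0

/-!
If `T` and `S` realise `I_m` and `E_m` in `L`, Cauchy–Schwarz against the unit vectors `T eᵢ`
shows that every row `a` of the cross Gram matrix `Tᵀ L S` satisfies `(a ⬝ y)² ≤ yᵀ E_m y`, i.e. is
a vector of norm `≤ 1` in the dual lattice of `E_m`. That dual lattice has minimum `4/3`, `3/2`, `2`
for `m = 6, 7, 8`, so `Tᵀ L S = 0` and the columns of `T` and `S` together represent `I_m ⊥ E_m`;
as `det E_m ≠ 0` this needs `2m ≤ n`. The dual minimum is controlled through `G = det(E_m) E_m⁻¹`:
a congruence shows that `aᵀ G a` never lies in `[1, det E_m]`.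
-/

namespace Matrix

variable {ι κ μ : Type*} [Fintype ι] [Fintype κ] [Fintype μ]

theorem mulVec_dotProduct_mulVec_mulVec {R : Type*} [CommSemiring R] (L : Matrix ι ι R)
    (T : Matrix ι κ R) (S : Matrix ι μ R) (x : κ → R) (y : μ → R) :
    T *ᵥ x ⬝ᵥ L *ᵥ (S *ᵥ y) = x ⬝ᵥ (Tᵀ * L * S) *ᵥ y := by
  rw [dotProduct_mulVec, ← vecMul_transpose, vecMul_vecMul, ← dotProduct_mulVec,
    mulVec_mulVec]

theorem dotProduct_mulVec_self_eq_of_add_transpose_eq {R : Type*} [CommRing R]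
    [IsAddTorsionFree R] {M N : Matrix ι ι R} (h : M + Mᵀ = N + Nᵀ) (a : ι → R) :
    a ⬝ᵥ M *ᵥ a = a ⬝ᵥ N *ᵥ a := by
  have h2 := congrArg (fun P => a ⬝ᵥ P *ᵥ a) h
  simp only [add_mulVec, dotProduct_add, dotProduct_transpose_mulVec] at h2
  rw [← two_nsmul, ← two_nsmul] at h2
  exact nsmul_right_injective two_ne_zero h2

theorem dvd_dotProduct_mulVec_self [LinearOrder ι] {k : ℤ} {M : Matrix ι ι ℤ}
    (hdiag : ∀ i, k ∣ M i i) (hoff : ∀ i j, k ∣ M i j + M j i) (a : ι → ℤ) :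
    k ∣ a ⬝ᵥ M *ᵥ a := by
  let N : Matrix ι ι ℤ := of fun i j =>
    if i < j then M i j + M j i else if i = j then M i i else 0
  have hN : M + Mᵀ = N + Nᵀ := by
    ext i j
    rcases lt_trichotomy i j with h | rfl | h
    · simp [N, h, h.ne', not_lt_of_gt h]
    · simp [N]
    · simp [N, h, h.ne', not_lt_of_gt h, add_comm]
  rw [dotProduct_mulVec_self_eq_of_add_transpose_eq hN]
  refine Finset.dvd_sum fun i _ => Dvd.dvd.mul_left ?_ _
  refine Finset.dvd_sum fun j _ => Dvd.dvd.mul_right ?_ _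
  simp only [N, of_apply]
  split_ifs
  exacts [hoff i j, by subst_vars; exact hdiag _, dvd_zero k]

theorem dotProduct_vecMulVec_mulVec_self {R : Type*} [CommSemiring R] (u a : ι → R) :
    a ⬝ᵥ vecMulVec u u *ᵥ a = (u ⬝ᵥ a) ^ 2 := by
  have h : vecMulVec u u *ᵥ a = (u ⬝ᵥ a) • u := by
    ext i
    simp only [mulVec, dotProduct, vecMulVec_apply, Pi.smul_apply, smul_eq_mul, Finset.sum_mul]
    exact Finset.sum_congr rfl fun j _ => by ring
  rw [h, dotProduct_smul, smul_eq_mul, dotProduct_comm, sq]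

theorem sq_dotProduct_mulVec_le {R : Type*} [CommRing R] [LinearOrder R] [IsStrictOrderedRing R]
    {L : Matrix ι ι R} (hLs : Lᵀ = L) (hL : ∀ z, 0 ≤ z ⬝ᵥ L *ᵥ z) {v : ι → R}
    (hv : v ⬝ᵥ L *ᵥ v = 1) (w : ι → R) : (v ⬝ᵥ L *ᵥ w) ^ 2 ≤ w ⬝ᵥ L *ᵥ w := by
  set t := v ⬝ᵥ L *ᵥ w
  have hwv : w ⬝ᵥ L *ᵥ v = t := by
    rw [← dotProduct_transpose_mulVec, hLs]
  have h := hL (w - t • v)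
  simp only [mulVec_sub, mulVec_smul, dotProduct_sub, sub_dotProduct, dotProduct_smul,
    smul_dotProduct, hv, hwv, smul_eq_mul] at h
  nlinarith

end Matrix

theorem IsPDForm.dotProduct_mulVec_nonneg {m : ℕ} {M : Matrix (Fin m) (Fin m) ℤ}
    (h : IsPDForm M) (x : Fin m → ℤ) : 0 ≤ x ⬝ᵥ M *ᵥ x := by
  rcases eq_or_ne x 0 with rfl | hx
  · simp
  · exact (h.2 x hx).le

section DualMinimum

variable {ι κ μ : Type*} [Fintype ι] [Fintype κ] [Fintype μ]

/-- `(a ⬝ᵥ y)² ≤ yᵀ E y` for all `y` says that `a`, read as a vector of the dual lattice,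
has norm `aᵀ E⁻¹ a ≤ 1`. -/
def DualMinimumGtOne (E : Matrix ι ι ℤ) : Prop :=
  ∀ a : ι → ℤ, (∀ y, (a ⬝ᵥ y) ^ 2 ≤ y ⬝ᵥ E *ᵥ y) → a = 0

theorem transpose_mul_mul_eq_zero_of_dualMinimumGtOne [DecidableEq κ] {L : Matrix ι ι ℤ}
    (hLs : Lᵀ = L) (hL : ∀ z, 0 ≤ z ⬝ᵥ L *ᵥ z) {T : Matrix ι κ ℤ} {S : Matrix ι μ ℤ}
    (hT : Tᵀ * L * T = 1) (hE : DualMinimumGtOne (Sᵀ * L * S)) : Tᵀ * L * S = 0 := by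
  ext i j
  suffices h : (Tᵀ * L * S) i = 0 from congrFun h j
  refine hE _ fun y => ?_
  have hv : T *ᵥ Pi.single i 1 ⬝ᵥ L *ᵥ (T *ᵥ Pi.single i 1) = 1 := by
    rw [mulVec_dotProduct_mulVec_mulVec, hT, one_mulVec, single_one_dotProduct,
      Pi.single_eq_same]
  have h := sq_dotProduct_mulVec_le hLs hL hv (S *ᵥ y)
  rwa [mulVec_dotProduct_mulVec_mulVec, mulVec_dotProduct_mulVec_mulVec,
    single_one_dotProduct] at h

variable [DecidableEq ι]

theorem dualMinimumGtOne_of_mul_eq_smul_one {E G : Matrix ι ι ℤ} {d : ℤ} (hd : 0 < d)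
    (hG : Gᵀ = G) (hGE : G * E = d • 1) (hEG : E * G = d • 1)
    (hgap : ∀ a, a ⬝ᵥ G *ᵥ a ∉ Set.Icc 1 d) : DualMinimumGtOne E := by
  intro a ha
  have hGa : ∀ y, G *ᵥ a ⬝ᵥ y = a ⬝ᵥ G *ᵥ y := fun y => by
    rw [dotProduct_comm, ← dotProduct_transpose_mulVec, hG]
  have hGaE : ∀ y, G *ᵥ a ⬝ᵥ E *ᵥ y = d * (a ⬝ᵥ y) := fun y => by
    rw [hGa, mulVec_mulVec, hGE, smul_mulVec, one_mulVec, dotProduct_smul, smul_eq_mul]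
  have hEGa : ∀ y, y ⬝ᵥ E *ᵥ (G *ᵥ a) = d * (y ⬝ᵥ a) := fun y => by
    rw [mulVec_mulVec, hEG, smul_mulVec, one_mulVec, dotProduct_smul, smul_eq_mul]
  have hq : a ⬝ᵥ G *ᵥ a = 0 := by
    have h : (a ⬝ᵥ G *ᵥ a) ^ 2 ≤ d * (a ⬝ᵥ G *ᵥ a) := by
      simpa only [hEGa, hGa] using ha (G *ᵥ a)
    have hgap_a := hgap a
    generalize a ⬝ᵥ G *ᵥ a = q at h hgap_a
    have hq_nonneg : 0 ≤ q := by nlinarith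
    by_contra hq0
    exact hgap_a ⟨by omega, by nlinarith⟩
  -- With `aᵀ G a = 0`, testing `eⱼ - (aⱼ Eⱼⱼ) • G a` gives `aⱼ² ≤ Eⱼⱼ (1 - 2 d aⱼ²)`.
  ext j
  have hjj : a j ^ 2 ≤ E j j := by
    simpa [mulVec_single_one] using ha (Pi.single j 1)
  have h := ha (Pi.single j 1 - (a j * E j j) • G *ᵥ a)
  simp only [mulVec_sub, mulVec_smul, dotProduct_sub, sub_dotProduct, dotProduct_smul,
    smul_dotProduct, hGaE, hEGa, hGa, hq, smul_eq_mul, dotProduct_single_one,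
    single_one_dotProduct, mul_zero, sub_zero] at h
  rw [mulVec_single_one, col_apply] at h
  show a j = 0
  by_contra hj
  have hdx : 1 ≤ d * a j ^ 2 :=
    one_le_mul_of_one_le_of_one_le hd ((one_le_sq_iff_one_le_abs _).mpr (Int.one_le_abs hj))
  nlinarith [mul_le_mul_of_nonneg_left hdx (sq_nonneg (a j) |>.trans hjj)]

end DualMinimum

theorem det_ne_zero_of_mul_eq_smul_one {ι R : Type*} [Fintype ι] [DecidableEq ι] [CommRing R]
    [IsDomain R] {E G : Matrix ι ι R} {d : R} (hd : d ≠ 0) (h : G * E = d • 1) : E.det ≠ 0 := by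
  intro h0
  have hdet := congrArg det h
  rw [det_mul, h0, mul_zero, det_smul, det_one, mul_one] at hdet
  exact pow_ne_zero _ hd hdet.symm

theorem represents_reindex_fromBlocks {n p q : ℕ} {L : Matrix (Fin n) (Fin n) ℤ}
    (hLs : Lᵀ = L) {T : Matrix (Fin n) (Fin p) ℤ} {S : Matrix (Fin n) (Fin q) ℤ}
    (hTS : Tᵀ * L * S = 0) :
    Represents L
      (reindex finSumFinEquiv finSumFinEquiv (fromBlocks (Tᵀ * L * T) 0 0 (Sᵀ * L * S))) := by
  have hST : Sᵀ * L * T = 0 := by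
    simpa [transpose_mul, hLs, Matrix.mul_assoc] using congrArg transpose hTS
  have hblocks :
      (fromCols T S)ᵀ * L * fromCols T S = fromBlocks (Tᵀ * L * T) 0 0 (Sᵀ * L * S) := by
    rw [transpose_fromCols, fromRows_mul, fromRows_mul_fromCols, hTS, hST]
  refine ⟨(fromCols T S).submatrix id finSumFinEquiv.symm, ?_⟩
  rw [reindex_apply, ← hblocks, transpose_submatrix,
    submatrix_mul _ _ _ id _ Function.bijective_id,
    submatrix_mul _ _ _ id _ Function.bijective_id, submatrix_id_id]

theorem Represents.le_of_det_ne_zero {n m : ℕ} {L : Matrix (Fin n) (Fin n) ℤ}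
    {N : Matrix (Fin m) (Fin m) ℤ} (h : Represents L N) (hN : N.det ≠ 0) : m ≤ n := by
  obtain ⟨T, rfl⟩ := h
  have hinj : Function.Injective T.mulVecLin := by
    rw [← LinearMap.ker_eq_bot, LinearMap.ker_eq_bot']
    intro x hx
    by_contra hx0
    refine hN (exists_mulVec_eq_zero_iff.mp ⟨x, hx0, ?_⟩)
    rw [← mulVec_mulVec, ← mulVecLin_apply T x, hx, mulVec_zero]
  simpa using LinearMap.finrank_le_finrank_of_injective hinj

theorem Int.sq_emod_three_eq_zero_or_one (x : ℤ) : x ^ 2 % 3 = 0 ∨ x ^ 2 % 3 = 1 := by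
  have h0 := Int.emod_nonneg x (by norm_num : (3 : ℤ) ≠ 0)
  have h3 := Int.emod_lt_of_pos x (by norm_num : (0 : ℤ) < 3)
  rw [sq, Int.mul_emod]
  interval_cases x % 3 <;> simp

theorem Int.sq_emod_four_eq_zero_or_one (x : ℤ) : x ^ 2 % 4 = 0 ∨ x ^ 2 % 4 = 1 := by
  have h0 := Int.emod_nonneg x (by norm_num : (4 : ℤ) ≠ 0)
  have h4 := Int.emod_lt_of_pos x (by norm_num : (0 : ℤ) < 4)
  rw [sq, Int.mul_emod]
  interval_cases x % 4 <;> simp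

-- `adjEₘ = det(Eₘ) • Eₘ⁻¹` is the adjugate of `EGram m`; `det E₆ = 3`, `det E₇ = 2`, `det E₈ = 1`.
def adjE6 : Matrix (Fin 6) (Fin 6) ℤ :=
  !![4, 5, 6, 4, 2, 3; 5, 10, 12, 8, 4, 6; 6, 12, 18, 12, 6, 9;
     4, 8, 12, 10, 5, 6; 2, 4, 6, 5, 4, 3; 3, 6, 9, 6, 3, 6]

def adjE7 : Matrix (Fin 7) (Fin 7) ℤ :=
  !![4, 6, 8, 6, 4, 2, 4; 6, 12, 16, 12, 8, 4, 8; 8, 16, 24, 18, 12, 6, 12;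
     6, 12, 18, 15, 10, 5, 9; 4, 8, 12, 10, 8, 4, 6; 2, 4, 6, 5, 4, 3, 3;
     4, 8, 12, 9, 6, 3, 7]

def adjE8 : Matrix (Fin 8) (Fin 8) ℤ :=
  !![4, 7, 10, 8, 6, 4, 2, 5; 7, 14, 20, 16, 12, 8, 4, 10; 10, 20, 30, 24, 18, 12, 6, 15;
     8, 16, 24, 20, 15, 10, 5, 12; 6, 12, 18, 15, 12, 8, 4, 9; 4, 8, 12, 10, 8, 6, 3, 6;
     2, 4, 6, 5, 4, 3, 2, 3; 5, 10, 15, 12, 9, 6, 3, 8]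

-- `adjE6 ≡ uuᵀ (mod 3)` for `u = (1, 2, 0, 1, 2, 0)`, so its values are squares mod 3.
theorem dotProduct_adjE6_mulVec_self_notMem (a : Fin 6 → ℤ) :
    a ⬝ᵥ adjE6 *ᵥ a ∉ Set.Icc 1 3 := by
  have h2 : 2 ∣ a ⬝ᵥ adjE6 *ᵥ a := dvd_dotProduct_mulVec_self (by decide) (by decide) a
  have h3 : 3 ∣ a ⬝ᵥ adjE6 *ᵥ a - (![1, 2, 0, 1, 2, 0] ⬝ᵥ a) ^ 2 := by
    rw [← dotProduct_vecMulVec_mulVec_self, ← dotProduct_sub, ← sub_mulVec]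
    exact dvd_dotProduct_mulVec_self (by decide) (by decide) a
  have hsq := Int.sq_emod_three_eq_zero_or_one (![1, 2, 0, 1, 2, 0] ⬝ᵥ a)
  rintro ⟨h1, h3'⟩
  omega

-- `adjE7 ≡ 3uuᵀ` as a quadratic form mod 4, for `u = (0, 0, 0, 1, 0, 1, 1)`.
theorem dotProduct_adjE7_mulVec_self_notMem (a : Fin 7 → ℤ) :
    a ⬝ᵥ adjE7 *ᵥ a ∉ Set.Icc 1 2 := by
  have h4 : 4 ∣ a ⬝ᵥ adjE7 *ᵥ a - 3 * (![0, 0, 0, 1, 0, 1, 1] ⬝ᵥ a) ^ 2 := by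
    rw [← dotProduct_vecMulVec_mulVec_self, ← smul_eq_mul, ← dotProduct_smul, ← smul_mulVec,
      ← dotProduct_sub, ← sub_mulVec]
    exact dvd_dotProduct_mulVec_self (by decide) (by decide) a
  have hsq := Int.sq_emod_four_eq_zero_or_one (![0, 0, 0, 1, 0, 1, 1] ⬝ᵥ a)
  rintro ⟨h1, h2⟩
  omega

theorem dotProduct_adjE8_mulVec_self_notMem (a : Fin 8 → ℤ) :
    a ⬝ᵥ adjE8 *ᵥ a ∉ Set.Icc 1 1 := by
  have h2 : 2 ∣ a ⬝ᵥ adjE8 *ᵥ a := dvd_dotProduct_mulVec_self (by decide) (by decide) a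
  rintro ⟨h1, h1'⟩
  omega

theorem exists_scaled_inverse_EGram {m : ℕ} (hm : m = 6 ∨ m = 7 ∨ m = 8) :
    ∃ (G : Matrix (Fin m) (Fin m) ℤ) (d : ℤ), 0 < d ∧ Gᵀ = G ∧ G * EGram m = d • 1 ∧
      EGram m * G = d • 1 ∧ ∀ a, a ⬝ᵥ G *ᵥ a ∉ Set.Icc 1 d := by
  rcases hm with rfl | rfl | rfl
  · exact ⟨adjE6, 3, by norm_num, by decide, by decide, by decide,
      dotProduct_adjE6_mulVec_self_notMem⟩
  · exact ⟨adjE7, 2, by norm_num, by decide, by decide, by decide,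
      dotProduct_adjE7_mulVec_self_notMem⟩
  · exact ⟨adjE8, 1, by norm_num, by decide, by decide, by decide,
      dotProduct_adjE8_mulVec_self_notMem⟩

theorem dualMinimumGtOne_EGram {m : ℕ} (hm : m = 6 ∨ m = 7 ∨ m = 8) :
    DualMinimumGtOne (EGram m) := by
  obtain ⟨G, d, hd, hG, hGE, hEG, hgap⟩ := exists_scaled_inverse_EGram hm
  exact dualMinimumGtOne_of_mul_eq_smul_one hd hG hGE hEG hgap

theorem det_EGram_ne_zero {m : ℕ} (hm : m = 6 ∨ m = 7 ∨ m = 8) : (EGram m).det ≠ 0 := by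
  obtain ⟨G, d, hd, -, hGE, -, -⟩ := exists_scaled_inverse_EGram hm
  exact det_ne_zero_of_mul_eq_smul_one hd.ne' hGE

/-- For m ∈ {6,7,8}: any positive definite integral form representing both I_m and E_m
represents I_m ⊥ E_m; in particular its rank is at least 2m. -/
theorem represents_Im_perp_Em (m : ℕ) (hm : m = 6 ∨ m = 7 ∨ m = 8)
    (n : ℕ) (L : Matrix (Fin n) (Fin n) ℤ) (hL : IsPDForm L)
    (hI : Represents L (1 : Matrix (Fin m) (Fin m) ℤ))
    (hE : Represents L (EGram m)) :
    Represents L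
      (Matrix.reindex finSumFinEquiv finSumFinEquiv
        (Matrix.fromBlocks (1 : Matrix (Fin m) (Fin m) ℤ) 0 0 (EGram m))) ∧
    2 * m ≤ n := by
  obtain ⟨T, hT⟩ := hI
  obtain ⟨S, hS⟩ := hE
  have hTS : Tᵀ * L * S = 0 := transpose_mul_mul_eq_zero_of_dualMinimumGtOne hL.1
    hL.dotProduct_mulVec_nonneg hT (hS ▸ dualMinimumGtOne_EGram hm)
  have hrep := represents_reindex_fromBlocks hL.1 hTS
  rw [hT, hS] at hrep
  refine ⟨hrep, ?_⟩
  have hrank := hrep.le_of_det_ne_zero <| by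
    rw [det_reindex_self, det_fromBlocks_zero₂₁, det_one, one_mul]
    exact det_EGram_ne_zero hm
  omega
end

section
/- The root form A₆ is not represented by the form I₆ ⊥ E₆. (Together with the fact that any quadratic form representing both I₆ and E₆ represents I₆ ⊥ E₆, this shows κ(6,12) = 2.) -/
/-!
E₆ is even and positive definite, so a vector of norm 2 in I₆ ⊥ E₆ lies entirely in one of
the two summands. The images of adjacent simple roots of A₆ have inner product −1, so they lie
in the same summand, and since the Dynkin diagram of A₆ is connected, A₆ is represented by I₆
alone or by E₆ alone. The first makes det A₆ = 7 a square, the second makes det E₆ = 3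
divide 7.
-/

open Matrix

/-- The Gram matrix of the root lattice A₆. -/
def A6 : Matrix (Fin 6) (Fin 6) ℤ :=
  !![2, -1, 0, 0, 0, 0;
     -1, 2, -1, 0, 0, 0;
     0, -1, 2, -1, 0, 0;
     0, 0, -1, 2, -1, 0;
     0, 0, 0, -1, 2, -1;
     0, 0, 0, 0, -1, 2]

/-- The Gram (Cartan) matrix of the root system E₆: chain 0–1–2–3–4 with node 5
attached to node 2. -/
def E6 : Matrix (Fin 6) (Fin 6) ℤ :=
  !![2, -1, 0, 0, 0, 0;
     -1, 2, -1, 0, 0, 0;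
     0, -1, 2, -1, 0, -1;
     0, 0, -1, 2, -1, 0;
     0, 0, 0, -1, 2, 0;
     0, 0, -1, 0, 0, 2]

theorem Represents.exists_transpose_mul_mul_eq_of_reindex {ι : Type*} [Fintype ι]
    {n m : ℕ} {e : ι ≃ Fin n} {L : Matrix ι ι ℤ} {N : Matrix (Fin m) (Fin m) ℤ}
    (h : Represents (reindex e e L) N) : ∃ S : Matrix ι (Fin m) ℤ, Sᵀ * L * S = N := by
  obtain ⟨T, hT⟩ := h
  refine ⟨T.submatrix e id, ?_⟩
  have hL : L = (reindex e e L).submatrix e e := by simp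
  rw [transpose_submatrix, hL, submatrix_mul_equiv, submatrix_mul_equiv, hT, submatrix_id_id]

theorem Fin.forall_of_chain {n : ℕ} {P Q : Fin (n + 1) → Prop} (hPQ : ∀ i, P i ∨ Q i)
    (h0 : P 0) (hstep : ∀ i : Fin n, P i.castSucc → ¬ Q i.succ) : ∀ i, P i := by
  intro i
  induction i using Fin.induction with
  | zero => exact h0
  | succ i ih => exact (hPQ i.succ).resolve_right (hstep i ih)

theorem Fin.forall_or_forall_of_chain {n : ℕ} {P Q : Fin (n + 1) → Prop}
    (hPQ : ∀ i, P i ∨ Q i) (hstep : ∀ i : Fin n, ¬ (P i.castSucc ∧ Q i.succ))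
    (hstep' : ∀ i : Fin n, ¬ (Q i.castSucc ∧ P i.succ)) : (∀ i, P i) ∨ ∀ i, Q i := by
  rcases hPQ 0 with h0 | h0
  · exact .inl (forall_of_chain hPQ h0 fun i hP hQ => hstep i ⟨hP, hQ⟩)
  · exact .inr (forall_of_chain (fun i => (hPQ i).symm) h0 fun i hQ hP => hstep' i ⟨hQ, hP⟩)

section BlockDiagonalGram

variable {k p q : Type*} [Fintype p] [Fintype q] {M : Matrix q q ℤ}

theorem Matrix.transpose_mul_fromBlocks_one_mul [DecidableEq p]
    (X : Matrix p k ℤ) (Y : Matrix q k ℤ) :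
    (X.fromRows Y)ᵀ * fromBlocks (1 : Matrix p p ℤ) 0 0 M * X.fromRows Y =
      Xᵀ * X + Yᵀ * M * Y := by
  rw [transpose_fromRows, fromCols_mul_fromBlocks, fromCols_mul_fromRows]
  simp

theorem Matrix.transpose_mul_add_transpose_mul_mul_apply
    (X : Matrix p k ℤ) (Y : Matrix q k ℤ) (i j : k) :
    (Xᵀ * X + Yᵀ * M * Y) i j = Xᵀ i ⬝ᵥ Xᵀ j + Yᵀ i ⬝ᵥ M *ᵥ Yᵀ j := by
  rw [add_apply, mul_apply', mul_apply', dotProduct_mulVec]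
  rfl

theorem Matrix.transpose_mul_add_transpose_mul_mul_apply_eq_zero
    {X : Matrix p k ℤ} {Y : Matrix q k ℤ} {i j : k}
    (hX : Xᵀ i = 0 ∨ Xᵀ j = 0) (hY : Yᵀ i = 0 ∨ Yᵀ j = 0) :
    (Xᵀ * X + Yᵀ * M * Y) i j = 0 := by
  rw [transpose_mul_add_transpose_mul_mul_apply]
  rcases hX with hX | hX <;> rcases hY with hY | hY <;> simp [hX, hY]

theorem Matrix.transpose_apply_eq_zero_or_of_apply_self_eq_two
    (hM : ∀ v, v ≠ 0 → 2 ≤ v ⬝ᵥ M *ᵥ v) {X : Matrix p k ℤ} {Y : Matrix q k ℤ} {i : k}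
    (h : (Xᵀ * X + Yᵀ * M * Y) i i = 2) : Xᵀ i = 0 ∨ Yᵀ i = 0 := by
  rw [transpose_mul_add_transpose_mul_mul_apply] at h
  by_contra! hXY
  have hX : 0 < Xᵀ i ⬝ᵥ Xᵀ i :=
    lt_of_le_of_ne (Finset.sum_nonneg fun a _ => mul_self_nonneg _)
      (Ne.symm (dotProduct_self_eq_zero.not.mpr hXY.1))
  have hY := hM _ hXY.2
  omega

theorem Matrix.eq_zero_or_eq_zero_of_superdiag_ne_zero {n : ℕ}
    {X : Matrix p (Fin (n + 1)) ℤ} {Y : Matrix q (Fin (n + 1)) ℤ}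
    (hsplit : ∀ i, Xᵀ i = 0 ∨ Yᵀ i = 0)
    (hchain : ∀ i : Fin n, (Xᵀ * X + Yᵀ * M * Y) i.castSucc i.succ ≠ 0) : X = 0 ∨ Y = 0 := by
  refine (Fin.forall_or_forall_of_chain hsplit (fun i h => hchain i ?_)
    (fun i h => hchain i ?_)).imp (fun hX => transpose_eq_zero.mp (funext hX))
    (fun hY => transpose_eq_zero.mp (funext hY))
  · exact transpose_mul_add_transpose_mul_mul_apply_eq_zero (.inl h.1) (.inr h.2)
  · exact transpose_mul_add_transpose_mul_mul_apply_eq_zero (.inr h.2) (.inl h.1)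

end BlockDiagonalGram

theorem Matrix.isSquare_det_of_transpose_mul_self_eq {n : Type*} [Fintype n] [DecidableEq n]
    {X N : Matrix n n ℤ} (h : Xᵀ * X = N) : IsSquare N.det :=
  ⟨X.det, by rw [← h, det_mul, det_transpose]⟩

theorem Matrix.det_dvd_det_of_transpose_mul_mul_eq {n : Type*} [Fintype n] [DecidableEq n]
    {Y M N : Matrix n n ℤ} (h : Yᵀ * M * Y = N) : M.det ∣ N.det :=
  ⟨Y.det * Y.det, by rw [← h, det_mul, det_mul, det_transpose]; ring⟩

theorem E6_quadForm_eq (v : Fin 6 → ℤ) :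
    v ⬝ᵥ E6 *ᵥ v = 2 * (v 0 ^ 2 + v 1 ^ 2 + v 2 ^ 2 + v 3 ^ 2 + v 4 ^ 2 + v 5 ^ 2
      - v 0 * v 1 - v 1 * v 2 - v 2 * v 3 - v 3 * v 4 - v 2 * v 5) := by
  simp [E6, dotProduct, mulVec, Fin.sum_univ_six]
  ring

theorem two_le_E6_quadForm {v : Fin 6 → ℤ} (hv : v ≠ 0) : 2 ≤ v ⬝ᵥ E6 *ᵥ v := by
  -- The LDLᵀ decomposition of E₆ in the node order 0, …, 5.
  have hsos : 120 * (v 0 ^ 2 + v 1 ^ 2 + v 2 ^ 2 + v 3 ^ 2 + v 4 ^ 2 + v 5 ^ 2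
      - v 0 * v 1 - v 1 * v 2 - v 2 * v 3 - v 3 * v 4 - v 2 * v 5) =
      30 * (2 * v 0 - v 1) ^ 2 + 10 * (3 * v 1 - 2 * v 2) ^ 2
        + 5 * (4 * v 2 - 3 * v 3 - 3 * v 5) ^ 2 + 3 * (5 * v 3 - 4 * v 4 - 3 * v 5) ^ 2
        + 18 * (2 * v 4 - v 5) ^ 2 + 30 * v 5 ^ 2 := by ring
  rw [E6_quadForm_eq]
  generalize (v 0 ^ 2 + v 1 ^ 2 + v 2 ^ 2 + v 3 ^ 2 + v 4 ^ 2 + v 5 ^ 2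
      - v 0 * v 1 - v 1 * v 2 - v 2 * v 3 - v 3 * v 4 - v 2 * v 5) = q at hsos ⊢
  suffices 0 < q by omega
  by_contra! hq
  have hsq : ∀ x : ℤ, x ^ 2 ≤ 0 → x = 0 := fun x hx =>
    pow_eq_zero_iff two_ne_zero |>.mp (le_antisymm hx (sq_nonneg x))
  have hsq0 := sq_nonneg (2 * v 0 - v 1)
  have hsq1 := sq_nonneg (3 * v 1 - 2 * v 2)
  have hsq2 := sq_nonneg (4 * v 2 - 3 * v 3 - 3 * v 5)
  have hsq3 := sq_nonneg (5 * v 3 - 4 * v 4 - 3 * v 5)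
  have hsq4 := sq_nonneg (2 * v 4 - v 5)
  have hsq5 := sq_nonneg (v 5)
  have h0 := hsq _ (by linarith : (2 * v 0 - v 1) ^ 2 ≤ 0)
  have h1 := hsq _ (by linarith : (3 * v 1 - 2 * v 2) ^ 2 ≤ 0)
  have h2 := hsq _ (by linarith : (4 * v 2 - 3 * v 3 - 3 * v 5) ^ 2 ≤ 0)
  have h3 := hsq _ (by linarith : (5 * v 3 - 4 * v 4 - 3 * v 5) ^ 2 ≤ 0)
  have h4 := hsq _ (by linarith : (2 * v 4 - v 5) ^ 2 ≤ 0)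
  have h5 := hsq _ (by linarith : v 5 ^ 2 ≤ 0)
  exact hv (funext fun i => by fin_cases i <;> simp <;> omega)

theorem A6_det : A6.det = 7 := by
  simp [A6, det_succ_row_zero, Fin.sum_univ_succ]
  decide

theorem E6_det : E6.det = 3 := by
  simp [E6, det_succ_row_zero, Fin.sum_univ_succ]
  decide

/-- A₆ is not represented by I₆ ⊥ E₆. -/
theorem A6_not_represented_by_I6_perp_E6 :
    ¬ Represents
      (Matrix.reindex finSumFinEquiv finSumFinEquiv
        (Matrix.fromBlocks (1 : Matrix (Fin 6) (Fin 6) ℤ) 0 0 E6)) A6 := by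
  intro h
  obtain ⟨S, hS⟩ := h.exists_transpose_mul_mul_eq_of_reindex
  rw [← fromRows_toRows S, transpose_mul_fromBlocks_one_mul] at hS
  have hsplit : ∀ i, S.toRows₁ᵀ i = 0 ∨ S.toRows₂ᵀ i = 0 := fun i =>
    transpose_apply_eq_zero_or_of_apply_self_eq_two (fun _ => two_le_E6_quadForm)
      (by rw [hS]; fin_cases i <;> rfl)
  rcases eq_zero_or_eq_zero_of_superdiag_ne_zero hsplit (by rw [hS]; decide) with hX | hY
  · rw [hX] at hS
    have := det_dvd_det_of_transpose_mul_mul_eq (by simpa using hS)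
    rw [A6_det, E6_det] at this
    norm_num at this
  · rw [hY] at hS
    have := isSquare_det_of_transpose_mul_self_eq (by simpa using hS)
    rw [A6_det] at this
    exact absurd this (by decide +kernel)
end
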